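/- arXiv:2304.03324 — 2 statements merged into one kernel-verified Lean document; each statement's English description precedes it below -/
import Mathlib

section
/- Let X be a finite-dimensional Banach space over ℝ or ℂ, let 1 < p < ∞ with conjugate exponent q, and let ({f_j}_{j=1}^n, {τ_j}_{j=1}^n) and ({g_k}_{k=1}^m, {ω_k}_{k=1}^m) be p-Schauder frames for X. Then for every nonzero x ∈ X, (‖θ_g x‖_0)^{1/p} · (‖θ_f x‖_0)^{1/q} ≥ 1 / max_{1≤j≤n, 1≤k≤m} |g_k(τ_j)|. -/
/-!
Write `M` for the largest `‖g_k(τ_j)‖`. Expanding `x = Σ_j f_j(x) τ_j` gives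
`‖g_k(x)‖ ≤ M Σ_j ‖f_j(x)‖` for every `k`, and Hölder's inequality on the support of `θ_f x` bounds
`Σ_j ‖f_j(x)‖` by `‖x‖ ‖θ_f x‖_0^{1/q}`. Feeding this uniform bound into
`‖x‖ = (Σ_k ‖g_k(x)‖^p)^{1/p}`, where only the `‖θ_g x‖_0` nonzero terms count, yields
`‖x‖ ≤ ‖θ_g x‖_0^{1/p} M ‖x‖ ‖θ_f x‖_0^{1/q}`; divide by `‖x‖`.
-/

open Finset

section SupportCard

variable {ι E : Type*} [Fintype ι] [NormedAddCommGroup E] [DecidableEq E] (v : ι → E)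

theorem sum_norm_le_lpNorm_mul_card_support_rpow {p q : ℝ} (hpq : p.HolderConjugate q) :
    ∑ i, ‖v i‖ ≤
      (∑ i, ‖v i‖ ^ p) ^ (1 / p) * ((univ.filter fun i => v i ≠ 0).card : ℝ) ^ (1 / q) := by
  set S := univ.filter fun i => v i ≠ 0
  have hS : ∑ i ∈ S, ‖v i‖ = ∑ i, ‖v i‖ :=
    sum_filter_of_ne fun i _ hi => norm_ne_zero_iff.mp hi
  calc ∑ i, ‖v i‖ = ∑ i ∈ S, ‖v i‖ * 1 := by simp only [mul_one, hS]
    _ ≤ (∑ i ∈ S, ‖v i‖ ^ p) ^ (1 / p) * (∑ _i ∈ S, (1 : ℝ) ^ q) ^ (1 / q) :=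
      Real.inner_le_Lp_mul_Lq_of_nonneg S hpq (fun i _ => norm_nonneg _) fun _ _ => zero_le_one
    _ ≤ (∑ i, ‖v i‖ ^ p) ^ (1 / p) * (S.card : ℝ) ^ (1 / q) := by
      simp only [Real.one_rpow, sum_const, nsmul_eq_mul, mul_one]
      gcongr
      · exact one_div_nonneg.mpr hpq.nonneg
      · exact subset_univ S

theorem lpNorm_le_card_support_rpow_mul {p B : ℝ} (hp : 0 < p) (hB : 0 ≤ B)
    (hv : ∀ i, ‖v i‖ ≤ B) :
    (∑ i, ‖v i‖ ^ p) ^ (1 / p) ≤ ((univ.filter fun i => v i ≠ 0).card : ℝ) ^ (1 / p) * B := by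
  set S := univ.filter fun i => v i ≠ 0
  have hS : ∑ i ∈ S, ‖v i‖ ^ p = ∑ i, ‖v i‖ ^ p := sum_filter_of_ne fun i _ hi => by
    intro hvi
    simp [hvi, Real.zero_rpow hp.ne'] at hi
  calc (∑ i, ‖v i‖ ^ p) ^ (1 / p) ≤ (S.card * B ^ p) ^ (1 / p) := by
        rw [← hS, ← nsmul_eq_mul, ← sum_const]
        gcongr with i
        exact hv i
    _ = (S.card : ℝ) ^ (1 / p) * B := by
      rw [Real.mul_rpow (by positivity) (by positivity), one_div, Real.rpow_rpow_inv hB hp.ne']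

end SupportCard

theorem norm_eq_lpNorm_of_rpow_eq {ι E F : Type*} [Fintype ι] [SeminormedAddCommGroup E]
    [SeminormedAddCommGroup F] (v : ι → E) {p : ℝ} (hp : 0 < p) {x : F}
    (h : ‖x‖ ^ p = ∑ i, ‖v i‖ ^ p) : ‖x‖ = (∑ i, ‖v i‖ ^ p) ^ (1 / p) := by
  rw [one_div, Real.eq_rpow_inv (norm_nonneg x) (by positivity) hp.ne']
  exact h

theorem norm_map_sum_smul_le {𝕜 E F ι : Type*} [NormedField 𝕜] [AddCommGroup E] [Module 𝕜 E]
    [SeminormedAddCommGroup F] [NormedSpace 𝕜 F] (s : Finset ι) (φ : E →ₗ[𝕜] F) (c : ι → 𝕜)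
    (τ : ι → E) {C : ℝ} (hC : ∀ i ∈ s, ‖φ (τ i)‖ ≤ C) :
    ‖φ (∑ i ∈ s, c i • τ i)‖ ≤ C * ∑ i ∈ s, ‖c i‖ := by
  rw [map_sum, mul_sum]
  refine (norm_sum_le _ _).trans (sum_le_sum fun i hi => ?_)
  rw [map_smul, norm_smul, mul_comm]
  exact mul_le_mul_of_nonneg_right (hC i hi) (norm_nonneg _)

theorem functional_uncertainty_principle_second_general
    {𝕂 : Type*} [RCLike 𝕂] {X : Type*} [NormedAddCommGroup X] [NormedSpace 𝕂 X]
    {n m : ℕ} (p q : ℝ) (hp : 1 < p) (hpq : 1 / p + 1 / q = 1)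
    (f : Fin n → (X →L[𝕂] 𝕂)) (τ : Fin n → X)
    (g : Fin m → (X →L[𝕂] 𝕂))
    (hf1 : ∀ x : X, ‖x‖ ^ p = ∑ j, ‖f j x‖ ^ p)
    (hf2 : ∀ x : X, x = ∑ j, f j x • τ j)
    (hg1 : ∀ x : X, ‖x‖ ^ p = ∑ k, ‖g k x‖ ^ p)
    (x : X) (hx : x ≠ 0) :
    ((univ.filter fun k => g k x ≠ 0).card : ℝ) ^ (1 / p) *
      ((univ.filter fun j => f j x ≠ 0).card : ℝ) ^ (1 / q) ≥
      1 / (⨆ jk : Fin n × Fin m, ‖g jk.2 (τ jk.1)‖) := by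
  set M := ⨆ jk : Fin n × Fin m, ‖g jk.2 (τ jk.1)‖
  set Nf : ℝ := ((univ.filter fun j => f j x ≠ 0).card : ℝ) ^ (1 / q)
  set Ng : ℝ := ((univ.filter fun k => g k x ≠ 0).card : ℝ) ^ (1 / p)
  have hpq' : p.HolderConjugate q :=
    Real.holderConjugate_iff.mpr ⟨hp, by rw [← one_div, ← one_div]; exact hpq⟩
  have hNf : 0 ≤ Nf := Real.rpow_nonneg (Nat.cast_nonneg _) _
  have hNg : 0 ≤ Ng := Real.rpow_nonneg (Nat.cast_nonneg _) _
  have hx0 : 0 < ‖x‖ := norm_pos_iff.mpr hx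
  rcases le_or_gt M 0 with hM | hM
  · exact (div_nonpos_of_nonneg_of_nonpos zero_le_one hM).trans (mul_nonneg hNg hNf)
  have hMle (j : Fin n) (k : Fin m) : ‖g k (τ j)‖ ≤ M :=
    le_ciSup (f := fun jk : Fin n × Fin m => ‖g jk.2 (τ jk.1)‖)
      (Set.finite_range _).bddAbove (j, k)
  have hl1 : ∑ j, ‖f j x‖ ≤ ‖x‖ * Nf := by
    rw [norm_eq_lpNorm_of_rpow_eq (fun j => f j x) hpq'.pos (hf1 x)]
    exact sum_norm_le_lpNorm_mul_card_support_rpow (fun j => f j x) hpq'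
  have hgx (k : Fin m) : ‖g k x‖ ≤ M * (‖x‖ * Nf) := by
    nth_rw 1 [hf2 x]
    exact (norm_map_sum_smul_le _ (g k).toLinearMap _ _ fun j _ => hMle j k).trans
      (by gcongr)
  have hx_le : ‖x‖ ≤ Ng * (M * (‖x‖ * Nf)) := by
    nth_rw 1 [norm_eq_lpNorm_of_rpow_eq (fun k => g k x) hpq'.pos (hg1 x)]
    exact lpNorm_le_card_support_rpow_mul (fun k => g k x) hpq'.pos
      (mul_nonneg hM.le (mul_nonneg hx0.le hNf)) hgx
  rw [ge_iff_le, div_le_iff₀ hM]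
  nlinarith

theorem functional_uncertainty_principle_second
    {𝕂 : Type*} [RCLike 𝕂] {X : Type*} [NormedAddCommGroup X] [NormedSpace 𝕂 X]
    [FiniteDimensional 𝕂 X]
    {n m : ℕ} (p q : ℝ) (hp : 1 < p) (hpq : 1 / p + 1 / q = 1)
    (f : Fin n → (X →L[𝕂] 𝕂)) (τ : Fin n → X)
    (g : Fin m → (X →L[𝕂] 𝕂)) (ω : Fin m → X)
    (hf1 : ∀ x : X, ‖x‖ ^ p = ∑ j, ‖f j x‖ ^ p)
    (hf2 : ∀ x : X, x = ∑ j, f j x • τ j)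
    (hg1 : ∀ x : X, ‖x‖ ^ p = ∑ k, ‖g k x‖ ^ p)
    (hg2 : ∀ x : X, x = ∑ k, g k x • ω k)
    (x : X) (hx : x ≠ 0) :
    ((univ.filter fun k => g k x ≠ 0).card : ℝ) ^ (1 / p) *
      ((univ.filter fun j => f j x ≠ 0).card : ℝ) ^ (1 / q) ≥
      1 / (⨆ jk : Fin n × Fin m, ‖g jk.2 (τ jk.1)‖) :=
  functional_uncertainty_principle_second_general p q hp hpq f τ g hf1 hf2 hg1 x hx
end

section
/- Let {τ_j}_{j=1}^n and {ω_k}_{k=1}^n be Parseval frames for a finite-dimensional Hilbert space H. Then for every nonzero h ∈ H, ((‖θ_τ h‖_0 + ‖θ_ω h‖_0)/2)² ≥ 1 / max_{1≤j,k≤n} |⟨τ_j, ω_k⟩|². -/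
/-!
A Parseval frame makes the analysis operator `x ↦ (⟪τ j, x⟫)_j` an isometry into `ℓ²`, hence
`⟪x, y⟫ = ∑ j, ⟪x, τ j⟫ ⟪τ j, y⟫`. Expanding `⟪h, ω k⟫` this way and applying Cauchy–Schwarz on the
support of `θ_τ h` bounds every `‖⟪h, ω k⟫‖²` by `‖h‖² ‖θ_τ h‖₀ M`, with `M` the largest
`‖⟪τ j, ω k⟫‖²`; summing over the support of `θ_ω h` gives `1 ≤ ‖θ_τ h‖₀ ‖θ_ω h‖₀ M`, and AM–GM
turns the product into the square of the mean.
-/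

open Finset

section

variable {𝕂 : Type*} [RCLike 𝕂] {H : Type*} [NormedAddCommGroup H] [InnerProductSpace 𝕂 H]
  {ι : Type*} [Fintype ι]

variable (𝕂) in
def IsParsevalFrame (τ : ι → H) : Prop :=
  ∀ h : H, ‖h‖ ^ 2 = ∑ j, ‖(inner 𝕂 h (τ j) : 𝕂)‖ ^ 2

namespace IsParsevalFrame

variable {τ : ι → H}

-- The coefficients are `⟪τ j, x⟫`, not `⟪x, τ j⟫`, so that the map is `𝕂`-linear.
def analysis (hτ : IsParsevalFrame 𝕂 τ) : H →ₗᵢ[𝕂] EuclideanSpace 𝕂 ι where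
  toFun x := WithLp.toLp 2 fun j => inner 𝕂 (τ j) x
  map_add' x y := by ext j; simp [inner_add_right]
  map_smul' c x := by ext j; simp [inner_smul_right]
  norm_map' x := by
    refine (sq_eq_sq₀ (norm_nonneg _) (norm_nonneg _)).1 ?_
    simp [EuclideanSpace.norm_sq_eq, hτ x, norm_inner_symm]

theorem inner_eq_sum (hτ : IsParsevalFrame 𝕂 τ) (x y : H) :
    inner 𝕂 x y = ∑ j, inner 𝕂 x (τ j) * inner 𝕂 (τ j) y := by
  rw [← hτ.analysis.inner_map_map, PiLp.inner_apply]
  simp only [analysis, LinearIsometry.coe_mk, LinearMap.coe_mk, AddHom.coe_mk, RCLike.inner_apply,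
    inner_conj_symm, mul_comm]

theorem norm_inner_sq_le (hτ : IsParsevalFrame 𝕂 τ) (x y : H) {M : ℝ}
    (hM : ∀ j, ‖(inner 𝕂 (τ j) y : 𝕂)‖ ^ 2 ≤ M) :
    ‖(inner 𝕂 x y : 𝕂)‖ ^ 2 ≤
      ‖x‖ ^ 2 * ((univ.filter fun j => (inner 𝕂 x (τ j) : 𝕂) ≠ 0).card * M) := by
  set T := univ.filter fun j => (inner 𝕂 x (τ j) : 𝕂) ≠ 0
  have h_expand : ‖(inner 𝕂 x y : 𝕂)‖ ≤
      ∑ j ∈ T, ‖(inner 𝕂 x (τ j) : 𝕂)‖ * ‖(inner 𝕂 (τ j) y : 𝕂)‖ := by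
    rw [hτ.inner_eq_sum, ← sum_filter_of_ne fun j _ hj => left_ne_zero_of_mul hj]
    simpa only [norm_mul] using norm_sum_le T fun j => inner 𝕂 x (τ j) * inner 𝕂 (τ j) y
  have h_coeff : ∑ j ∈ T, ‖(inner 𝕂 x (τ j) : 𝕂)‖ ^ 2 ≤ ‖x‖ ^ 2 := by
    rw [hτ x]
    exact sum_le_sum_of_subset_of_nonneg (filter_subset _ _) fun _ _ _ => by positivity
  have h_cross : ∑ j ∈ T, ‖(inner 𝕂 (τ j) y : 𝕂)‖ ^ 2 ≤ T.card * M := by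
    simpa using sum_le_sum fun j (_ : j ∈ T) => hM j
  calc ‖(inner 𝕂 x y : 𝕂)‖ ^ 2
      ≤ (∑ j ∈ T, ‖(inner 𝕂 x (τ j) : 𝕂)‖ * ‖(inner 𝕂 (τ j) y : 𝕂)‖) ^ 2 :=
        pow_le_pow_left₀ (norm_nonneg _) h_expand 2
    _ ≤ (∑ j ∈ T, ‖(inner 𝕂 x (τ j) : 𝕂)‖ ^ 2) * ∑ j ∈ T, ‖(inner 𝕂 (τ j) y : 𝕂)‖ ^ 2 :=
        sum_mul_sq_le_sq_mul_sq _ _ _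
    _ ≤ ‖x‖ ^ 2 * (T.card * M) :=
        mul_le_mul h_coeff h_cross (sum_nonneg fun _ _ => by positivity) (by positivity)

theorem one_le_card_mul_card_mul_iSup {ω : ι → H} (hτ : IsParsevalFrame 𝕂 τ)
    (hω : IsParsevalFrame 𝕂 ω) {h : H} (hh : h ≠ 0) :
    1 ≤ ((univ.filter fun j => (inner 𝕂 h (τ j) : 𝕂) ≠ 0).card : ℝ) *
      (univ.filter fun k => (inner 𝕂 h (ω k) : 𝕂) ≠ 0).card *
      ⨆ jk : ι × ι, ‖(inner 𝕂 (τ jk.1) (ω jk.2) : 𝕂)‖ ^ 2 := by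
  set a : ℝ := ((univ.filter fun j => (inner 𝕂 h (τ j) : 𝕂) ≠ 0).card : ℝ)
  set W := univ.filter fun k => (inner 𝕂 h (ω k) : 𝕂) ≠ 0
  set M := ⨆ jk : ι × ι, ‖(inner 𝕂 (τ jk.1) (ω jk.2) : 𝕂)‖ ^ 2
  have hM (j k : ι) : ‖(inner 𝕂 (τ j) (ω k) : 𝕂)‖ ^ 2 ≤ M :=
    Finite.le_ciSup (fun jk : ι × ι => ‖(inner 𝕂 (τ jk.1) (ω jk.2) : 𝕂)‖ ^ 2) (j, k)
  have h_norm : ‖h‖ ^ 2 ≤ ‖h‖ ^ 2 * (a * W.card * M) :=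
    calc ‖h‖ ^ 2 = ∑ k ∈ W, ‖(inner 𝕂 h (ω k) : 𝕂)‖ ^ 2 := by
          rw [hω h, sum_filter_of_ne fun k _ hk => by simpa using hk]
      _ ≤ ∑ _k ∈ W, ‖h‖ ^ 2 * (a * M) :=
          sum_le_sum fun k _ => hτ.norm_inner_sq_le h (ω k) fun j => hM j k
      _ = ‖h‖ ^ 2 * (a * W.card * M) := by rw [sum_const, nsmul_eq_mul]; ring
  exact le_of_mul_le_mul_left (by simpa using h_norm) (by positivity)

end IsParsevalFrame

end

theorem ricaud_torresani_uncertainty_sum_general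
    {𝕂 : Type*} [RCLike 𝕂] {H : Type*} [NormedAddCommGroup H] [InnerProductSpace 𝕂 H]
    {n : ℕ} (τ ω : Fin n → H)
    (hτ : ∀ h : H, ‖h‖ ^ 2 = ∑ j, ‖(inner 𝕂 h (τ j) : 𝕂)‖ ^ 2)
    (hω : ∀ h : H, ‖h‖ ^ 2 = ∑ k, ‖(inner 𝕂 h (ω k) : 𝕂)‖ ^ 2)
    (h : H) (hh : h ≠ 0) :
    ((((univ.filter fun j => (inner 𝕂 h (τ j) : 𝕂) ≠ 0).card : ℝ) +
      ((univ.filter fun k => (inner 𝕂 h (ω k) : 𝕂) ≠ 0).card : ℝ)) / 2) ^ 2 ≥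
      1 / (⨆ jk : Fin n × Fin n, ‖(inner 𝕂 (τ jk.1) (ω jk.2) : 𝕂)‖ ^ 2) := by
  set a : ℝ := ((univ.filter fun j => (inner 𝕂 h (τ j) : 𝕂) ≠ 0).card : ℝ)
  set b : ℝ := ((univ.filter fun k => (inner 𝕂 h (ω k) : 𝕂) ≠ 0).card : ℝ)
  set M := ⨆ jk : Fin n × Fin n, ‖(inner 𝕂 (τ jk.1) (ω jk.2) : 𝕂)‖ ^ 2
  have h_prod : 1 ≤ a * b * M := IsParsevalFrame.one_le_card_mul_card_mul_iSup hτ hω hh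
  have hM : 0 < M := pos_of_mul_pos_right (one_pos.trans_le h_prod) (by positivity)
  have h_amgm : a * b ≤ ((a + b) / 2) ^ 2 := by linarith [four_mul_le_sq_add a b]
  rw [ge_iff_le, div_le_iff₀ hM]
  calc 1 ≤ a * b * M := h_prod
    _ ≤ ((a + b) / 2) ^ 2 * M := by gcongr

theorem ricaud_torresani_uncertainty_sum
    {𝕂 : Type*} [RCLike 𝕂] {H : Type*} [NormedAddCommGroup H] [InnerProductSpace 𝕂 H]
    [FiniteDimensional 𝕂 H]
    {n : ℕ} (τ ω : Fin n → H)
    (hτ : ∀ h : H, ‖h‖ ^ 2 = ∑ j, ‖(inner 𝕂 h (τ j) : 𝕂)‖ ^ 2)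
    (hω : ∀ h : H, ‖h‖ ^ 2 = ∑ k, ‖(inner 𝕂 h (ω k) : 𝕂)‖ ^ 2)
    (h : H) (hh : h ≠ 0) :
    ((((univ.filter fun j => (inner 𝕂 h (τ j) : 𝕂) ≠ 0).card : ℝ) +
      ((univ.filter fun k => (inner 𝕂 h (ω k) : 𝕂) ≠ 0).card : ℝ)) / 2) ^ 2 ≥
      1 / (⨆ jk : Fin n × Fin n, ‖(inner 𝕂 (τ jk.1) (ω jk.2) : 𝕂)‖ ^ 2) :=
  ricaud_torresani_uncertainty_sum_general τ ω hτ hω h hh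
end
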